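/- Let b, c ∈ (0, 1/2] and set a1 = a2 = b, a3 = c, and let D1 = 1 - 4*(1 - 2*c)*(b + c). Then a triple of positive reals (x1, x2, x3) with x1 = x2 satisfies system (S) if and only if D1 ≥ 0 and there exist q > 0 and μ ∈ {1 - sqrt(D1), 1 + sqrt(D1)} with μ > 0 such that (x1, x2, x3) = (2*(b+c)*q, 2*(b+c)*q, μ*q). In particular, such solutions exist exactly when D1 ≥ 0; when c = 1/2 they form the single family ((b+c)*q, (b+c)*q, q), and when c < 1/2 and D1 > 0 they form two distinct families. -/
import Mathlib


noncomputable section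
open Real Set

/-- First equation of system (S). -/
def eqS1 (a1 a2 a3 x1 x2 x3 : ℝ) : Prop :=
  (a2 + a3)*(a1*x2^2 + a1*x3^2 - x2*x3) + (a2*x2 + a3*x3)*x1
    - (a1*a2 + a1*a3 + 2*a2*a3)*x1^2 = 0

/-- Second equation of system (S). -/
def eqS2 (a1 a2 a3 x1 x2 x3 : ℝ) : Prop :=
  (a1 + a3)*(a2*x1^2 + a2*x3^2 - x1*x3) + (a1*x1 + a3*x3)*x2
    - (a1*a2 + 2*a1*a3 + a2*a3)*x2^2 = 0

theorem equal_x1_x2_solutions (b c : ℝ)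
    (hb : b ∈ Ioc (0:ℝ) (1/2)) (hc : c ∈ Ioc (0:ℝ) (1/2)) :
    (∀ x1 x2 x3 : ℝ, 0 < x1 → 0 < x2 → 0 < x3 → x1 = x2 →
      ((eqS1 b b c x1 x2 x3 ∧ eqS2 b b c x1 x2 x3) ↔
        (0 ≤ 1 - 4*(1 - 2*c)*(b + c) ∧
          ∃ q : ℝ, 0 < q ∧ ∃ μ : ℝ,
            (μ = 1 - Real.sqrt (1 - 4*(1 - 2*c)*(b + c)) ∨
             μ = 1 + Real.sqrt (1 - 4*(1 - 2*c)*(b + c))) ∧ 0 < μ ∧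
            x1 = 2*(b + c)*q ∧ x2 = 2*(b + c)*q ∧ x3 = μ*q))) ∧
    ((∃ x1 x2 x3 : ℝ, 0 < x1 ∧ 0 < x2 ∧ 0 < x3 ∧ x1 = x2 ∧
        eqS1 b b c x1 x2 x3 ∧ eqS2 b b c x1 x2 x3) ↔
      0 ≤ 1 - 4*(1 - 2*c)*(b + c)) := by
  obtain ⟨hb0, hb2⟩ := hb
  obtain ⟨hc0, hc2⟩ := hc
  have hbc : (0:ℝ) < b + c := by linarith
  set D : ℝ := 1 - 4*(1 - 2*c)*(b + c) with hDdef
  have main : ∀ x1 x2 x3 : ℝ, 0 < x1 → 0 < x2 → 0 < x3 → x1 = x2 →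
      ((eqS1 b b c x1 x2 x3 ∧ eqS2 b b c x1 x2 x3) ↔
        (0 ≤ D ∧
          ∃ q : ℝ, 0 < q ∧ ∃ μ : ℝ,
            (μ = 1 - Real.sqrt D ∨ μ = 1 + Real.sqrt D) ∧ 0 < μ ∧
            x1 = 2*(b + c)*q ∧ x2 = 2*(b + c)*q ∧ x3 = μ*q)) := by
    intro x1 x2 x3 hx1 hx2 hx3 he
    subst he
    simp only [eqS1, eqS2]
    constructor
    · rintro ⟨h1, -⟩
      have key : (b + c)*x3^2 - x1*x3 + (1 - 2*c)*x1^2 = 0 := by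
        have hmul : b * ((b + c)*x3^2 - x1*x3 + (1 - 2*c)*x1^2) = 0 := by
          linear_combination h1
        rcases mul_eq_zero.mp hmul with h | h
        · exact absurd h hb0.ne'
        · exact h
      have hμeq : (2*(b+c)*x3 - x1)^2 = D * x1^2 := by
        rw [hDdef]; linear_combination (4*(b+c)) * key
      have hD : 0 ≤ D := by
        nlinarith [sq_nonneg (2*(b+c)*x3 - x1), mul_pos hx1 hx1, hμeq]
      set q : ℝ := x1 / (2*(b+c)) with hqdef
      have hq : 0 < q := by positivity
      have x1eq : x1 = 2*(b+c)*q := by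
        rw [hqdef]; field_simp
      set μ : ℝ := x3 / q with hμdef
      have hμpos : 0 < μ := div_pos hx3 hq
      have x3eq : x3 = μ*q := by
        rw [hμdef, div_mul_cancel₀ _ hq.ne']
      have h3 : (x3 - q)^2 * (2*(b+c))^2 = (D * q^2) * (2*(b+c))^2 := by
        rw [x1eq] at hμeq
        linear_combination hμeq
      have h4 : (μ - 1)^2 = D := by
        have h5 : (x3 - q)^2 = D * q^2 :=
          mul_right_cancel₀ (by positivity) h3
        rw [hμdef]
        field_simp
        linear_combination h5
      have hsq : Real.sqrt D = |μ - 1| := by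
        rw [← h4, Real.sqrt_sq_eq_abs]
      refine ⟨hD, q, hq, μ, ?_, hμpos, x1eq, x1eq, x3eq⟩
      rcases le_or_gt 1 μ with h | h
      · right; rw [hsq, abs_of_nonneg (by linarith)]; ring
      · left; rw [hsq, abs_of_neg (by linarith)]; ring
    · rintro ⟨hD, q, hq, μ, hμ12, hμpos, hx1e, -, hx3e⟩
      have hs : Real.sqrt D ^ 2 = D := Real.sq_sqrt hD
      subst hx1e
      subst hx3e
      rcases hμ12 with rfl | rfl
      · constructor
        · linear_combination (b*(b+c)*q^2) * hs
        · linear_combination (b*(b+c)*q^2) * hs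
      · constructor
        · linear_combination (b*(b+c)*q^2) * hs
        · linear_combination (b*(b+c)*q^2) * hs
  refine ⟨main, ?_, ?_⟩
  · rintro ⟨x1, x2, x3, h1, h2, h3, he, hs1, hs2⟩
    exact ((main x1 x2 x3 h1 h2 h3 he).mp ⟨hs1, hs2⟩).1
  · intro hD
    have hμpos : 0 < 1 + Real.sqrt D := by
      have := Real.sqrt_nonneg D
      linarith
    refine ⟨2*(b+c), 2*(b+c), 1 + Real.sqrt D, by positivity, by positivity,
      hμpos, rfl, ?_⟩
    exact (main _ _ _ (by positivity) (by positivity) hμpos rfl).mpr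
      ⟨hD, 1, one_pos, 1 + Real.sqrt D, Or.inr rfl, hμpos,
        by ring, by ring, by ring⟩
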